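/- Let p > 1 and q = p/(p-1). With the substitution y = t^q, the integral I(t) = ∫_0^∞ e^{tx - x^p} dx satisfies ln I(t) ~ ((p-1)/p^q) t^q as t → +∞; consequently the logarithmic moment generating function of the p-measure ν_p (density (2Γ(1+1/p))^{-1} e^{-|x|^p}) satisfies Λ_{ν_p}(t) ~ ((p-1)/p^q) t^q as t → +∞. -/

import Mathlib

open MeasureTheory Filter Set Real Topology
open scoped ENNReal NNReal

noncomputable def nup (p : ℝ) : Measure ℝ :=
  volume.withDensity fun x =>
    ENNReal.ofReal ((2 * Real.Gamma (1 + 1 / p))⁻¹ * exp (-(|x| ^ p)))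


lemma conj_pq {p q : ℝ} (hp : 1 < p) (hq : q = p / (p - 1)) : p.HolderConjugate q :=
  (Real.holderConjugate_iff_eq_conjExponent hp).2 hq

lemma q_facts {p q : ℝ} (hp : 1 < p) (hq : q = p / (p - 1)) :
    1 < q ∧ p⁻¹ * q = q - 1 := by
  have h1 : p - 1 ≠ 0 := by linarith
  have h2 : p ≠ 0 := by linarith
  constructor
  · rw [hq, lt_div_iff₀ (by linarith)]; linarith
  · field_simp [hq]
    have : q * (p - 1) = p := by rw [hq, div_mul_cancel₀ _ h1]
    linarith

lemma young_key {p q : ℝ} (hp : 1 < p) (hq : q = p / (p - 1)) {t x : ℝ}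
    (ht : 0 ≤ t) (hx : 0 ≤ x) :
    t * x ≤ x ^ p + (p - 1) / p ^ q * t ^ q := by
  have hpq := conj_pq hp hq
  have hp0 : (0:ℝ) < p := by linarith
  have hp1 : p - 1 ≠ 0 := by linarith
  have hq1q : p⁻¹ * q = q - 1 := (q_facts hp hq).2
  have hα0 : (0:ℝ) < p ^ (p⁻¹ : ℝ) := rpow_pos_of_pos hp0 _
  have h := Real.young_inequality_of_nonneg (mul_nonneg hα0.le hx)
    (mul_nonneg (inv_nonneg.2 hα0.le) ht) hpq
  have hαp : (p ^ (p⁻¹ : ℝ)) ^ p = p := by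
    rw [← Real.rpow_mul hp0.le, inv_mul_cancel₀ (by linarith : p ≠ 0), Real.rpow_one]
  have hαq : ((p ^ (p⁻¹:ℝ))⁻¹) ^ q = p / p ^ q := by
    rw [Real.inv_rpow (rpow_nonneg hp0.le _), ← Real.rpow_mul hp0.le, hq1q,
      ← Real.rpow_neg hp0.le]
    rw [show -(q-1) = 1 - q by ring, Real.rpow_sub hp0, Real.rpow_one]
  have e1 : (p ^ (p⁻¹:ℝ) * x) * ((p ^ (p⁻¹:ℝ))⁻¹ * t) = t * x := by
    field_simp
  have e2 : (p ^ (p⁻¹:ℝ) * x) ^ p = p * x ^ p := by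
    rw [Real.mul_rpow (rpow_nonneg hp0.le _) hx, hαp]
  have e3 : ((p ^ (p⁻¹:ℝ))⁻¹ * t) ^ q = (p / p ^ q) * t ^ q := by
    rw [Real.mul_rpow (inv_nonneg.2 (rpow_nonneg hp0.le _)) ht, hαq]
  rw [e1, e2, e3] at h
  have hpq0 : (0:ℝ) < p ^ q := rpow_pos_of_pos hp0 q
  have hq0 : q ≠ 0 := by have := (q_facts hp hq).1; linarith
  calc t * x ≤ p * x ^ p / p + p / p ^ q * t ^ q / q := h
    _ = x ^ p + (p - 1) / p ^ q * t ^ q := by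
        rw [hq]; field_simp

lemma cont_integrand (p t : ℝ) (hp0 : 0 ≤ p) : Continuous fun x : ℝ => exp (t * x - x ^ p) :=
  Real.continuous_exp.comp ((continuous_const.mul continuous_id).sub
    (Real.continuous_rpow_const hp0))

lemma integrable_base {p : ℝ} (hp : 1 < p) :
    IntegrableOn (fun x : ℝ => exp (-2⁻¹ * x ^ p)) (Ioi 0) := by
  have h := integrableOn_rpow_mul_exp_neg_mul_rpow (s := 0) (p := p) (by norm_num) (by linarith)
    (by norm_num : (0:ℝ) < 2⁻¹)
  refine h.congr_fun (fun x hx => ?_) measurableSet_Ioi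
  simp only [Real.rpow_zero, one_mul]

lemma pointwise_bound {p q : ℝ} (hp : 1 < p) (hq : q = p / (p - 1)) (t : ℝ) {x : ℝ}
    (hx : 0 < x) :
    exp (t * x - x ^ p) ≤ exp ((p - 1) / p ^ q * (2 * |t|) ^ q) * exp (-2⁻¹ * x ^ p) := by
  rw [← Real.exp_add]
  apply Real.exp_le_exp.2
  have h := young_key hp hq (t := 2 * |t|) (x := x) (by positivity) hx.le
  have h2 : t * x ≤ |t| * x := mul_le_mul_of_nonneg_right (le_abs_self t) hx.le
  have h3 : 0 ≤ (p - 1) / p ^ q * (2 * |t|) ^ q := by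
    have hpq0 := rpow_pos_of_pos (show (0:ℝ) < p by linarith) q
    have h2t := rpow_nonneg (show (0:ℝ) ≤ 2 * |t| by positivity) q
    exact mul_nonneg (div_nonneg (by linarith) hpq0.le) h2t
  linarith

lemma integrableI {p q : ℝ} (hp : 1 < p) (hq : q = p / (p - 1)) (t : ℝ) :
    IntegrableOn (fun x : ℝ => exp (t * x - x ^ p)) (Ioi 0) := by
  refine Integrable.mono'
    ((integrable_base hp).const_mul (exp ((p - 1) / p ^ q * (2 * |t|) ^ q)))
    ((cont_integrand p t (by linarith)).aestronglyMeasurable.restrict) ?_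
  filter_upwards [ae_restrict_mem measurableSet_Ioi] with x hx
  rw [Real.norm_eq_abs, Real.abs_exp]
  exact pointwise_bound hp hq t hx

lemma lowerI {p q : ℝ} (hp : 1 < p) (hq : q = p / (p - 1)) {t : ℝ} (ht : max p 1 ≤ t) :
    (p - 1) / p ^ q * t ^ q - 2 ^ (p - 1) * t ≤
      log (∫ x in Ioi (0:ℝ), exp (t * x - x ^ p)) := by
  have hp0 : (0:ℝ) < p := by linarith
  have hp1 : p - 1 ≠ 0 := by linarith
  have ht0 : (0:ℝ) < t := lt_of_lt_of_le (by linarith) ((le_max_left p 1).trans ht)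
  have htp : p ≤ t := (le_max_left p 1).trans ht
  have he : (p - 1)⁻¹ = q - 1 := by
    field_simp [hq]
    have : q * (p - 1) = p := by rw [hq, div_mul_cancel₀ _ hp1]
    linarith
  set x₀ : ℝ := (t / p) ^ ((p - 1)⁻¹ : ℝ) with hx₀def
  have htp1 : 1 ≤ t / p := (one_le_div hp0).2 htp
  have hx₀1 : 1 ≤ x₀ := by
    calc (1:ℝ) = 1 ^ ((p-1)⁻¹ : ℝ) := (Real.one_rpow _).symm
    _ ≤ x₀ := Real.rpow_le_rpow zero_le_one htp1 (by rw [inv_nonneg]; linarith)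
  have hx₀0 : 0 < x₀ := by linarith
  have key1 : x₀ ^ (p - 1) = t / p := by
    rw [hx₀def, ← Real.rpow_mul (div_nonneg ht0.le hp0.le),
      inv_mul_cancel₀ hp1, Real.rpow_one]
  have key2 : x₀ ^ p = (t / p) * x₀ := by
    have : p = (p - 1) + 1 := by ring
    nth_rewrite 1 [this]
    rw [Real.rpow_add hx₀0, key1, Real.rpow_one]
  -- value at the max point
  have hA : t ^ q = t * t ^ (q - 1) := by
    nth_rewrite 1 [show q = 1 + (q - 1) by ring]
    rw [Real.rpow_add ht0, Real.rpow_one]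
  have hB : p ^ q = p * p ^ (q - 1) := by
    nth_rewrite 1 [show q = 1 + (q - 1) by ring]
    rw [Real.rpow_add hp0, Real.rpow_one]
  have hx0eq : x₀ = t ^ (q - 1) / p ^ (q - 1) := by
    rw [hx₀def, he, Real.div_rpow ht0.le hp0.le]
  have hpq1 : (0:ℝ) < p ^ (q - 1) := rpow_pos_of_pos hp0 _
  have key3 : t * x₀ - x₀ ^ p = (p - 1) / p ^ q * t ^ q := by
    rw [key2, hx0eq, hA, hB]
    field_simp
  -- mean value theorem bound
  have hmvt : (x₀ + 1) ^ p - x₀ ^ p ≤ p * (x₀ + 1) ^ (p - 1) := by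
    obtain ⟨ξ, hξ, hslope⟩ := exists_hasDerivAt_eq_slope (fun x : ℝ => x ^ p)
      (fun x : ℝ => p * x ^ (p - 1)) (by linarith : x₀ < x₀ + 1)
      (Real.continuous_rpow_const hp0.le).continuousOn
      (fun x hx => Real.hasDerivAt_rpow_const (Or.inl (by rcases hx with ⟨h1, _⟩; nlinarith)))
    have hξ1 : ξ ≤ x₀ + 1 := hξ.2.le
    have hξ0 : 0 ≤ ξ := by rcases hξ with ⟨h1, _⟩; nlinarith
    have : (x₀ + 1) ^ p - x₀ ^ p = p * ξ ^ (p - 1) := by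
      rw [hslope, show x₀ + 1 - x₀ = 1 by ring, div_one]
    rw [this]
    exact mul_le_mul_of_nonneg_left (Real.rpow_le_rpow hξ0 hξ1 (by linarith)) hp0.le
  have hstep : p * (x₀ + 1) ^ (p - 1) ≤ 2 ^ (p - 1) * t := by
    have h1 : (x₀ + 1 : ℝ) ≤ 2 * x₀ := by linarith
    have h2 : (x₀ + 1 : ℝ) ^ (p - 1) ≤ (2 * x₀) ^ (p - 1) :=
      Real.rpow_le_rpow (by linarith) h1 (by linarith)
    have h3 : ((2:ℝ) * x₀) ^ (p - 1) = 2 ^ (p - 1) * (t / p) := by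
      rw [Real.mul_rpow (by norm_num) hx₀0.le, key1]
    calc p * (x₀ + 1) ^ (p - 1) ≤ p * (2 ^ (p - 1) * (t / p)) := by
          rw [← h3]; exact mul_le_mul_of_nonneg_left h2 hp0.le
      _ = 2 ^ (p - 1) * t := by field_simp
  -- integral lower bound
  set I := ∫ x in Ioi (0:ℝ), exp (t * x - x ^ p) with hI
  have hmono : ∫ x in Ioc x₀ (x₀ + 1), exp (t * x - x ^ p) ≤ I := by
    apply setIntegral_mono_set (integrableI hp hq t)
    · filter_upwards with x using (exp_pos _).le
    · filter_upwards with x hx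
      exact lt_trans hx₀0 hx.1
  have hconst : exp (t * x₀ - (x₀ + 1) ^ p) * (volume (Ioc x₀ (x₀ + 1))).toReal ≤
      ∫ x in Ioc x₀ (x₀ + 1), exp (t * x - x ^ p) := by
    apply setIntegral_ge_of_const_le_real measurableSet_Ioc
    · rw [Real.volume_Ioc]; exact ENNReal.ofReal_ne_top
    · intro x hx
      apply Real.exp_le_exp.2
      have h1 : t * x₀ ≤ t * x := mul_le_mul_of_nonneg_left hx.1.le ht0.le
      have h2 : x ^ p ≤ (x₀ + 1) ^ p := Real.rpow_le_rpow (by nlinarith [hx.1]) hx.2 hp0.le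
      linarith
    · exact (integrableI hp hq t).mono_set (fun x hx => lt_trans hx₀0 hx.1)
  have hvol : (volume (Ioc x₀ (x₀ + 1))).toReal = 1 := by
    rw [Real.volume_Ioc]; simp
  rw [hvol, mul_one] at hconst
  have hIpos : 0 < I := lt_of_lt_of_le (exp_pos _) (hconst.trans hmono)
  have : (p - 1) / p ^ q * t ^ q - 2 ^ (p - 1) * t ≤ t * x₀ - (x₀ + 1) ^ p := by
    rw [← key3]; linarith
  calc (p - 1) / p ^ q * t ^ q - 2 ^ (p - 1) * t ≤ t * x₀ - (x₀ + 1) ^ p := this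
    _ ≤ log I := (Real.le_log_iff_exp_le hIpos).2 (hconst.trans hmono)

noncomputable def Kp (p : ℝ) : ℝ := ∫ x in Ioi (0:ℝ), exp (-2⁻¹ * x ^ p)

lemma Kp_nonneg (p : ℝ) : 0 ≤ Kp p :=
  setIntegral_nonneg measurableSet_Ioi (fun x _ => (exp_pos _).le)

lemma Ipos {p q : ℝ} (hp : 1 < p) (hq : q = p / (p - 1)) (t : ℝ) :
    0 < ∫ x in Ioi (0:ℝ), exp (t * x - x ^ p) := by
  rw [setIntegral_pos_iff_support_of_nonneg_ae
    (Filter.Eventually.of_forall (fun x => (exp_pos _).le)) (integrableI hp hq t)]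
  have : (Function.support fun x : ℝ => exp (t * x - x ^ p)) = univ := by
    ext x; simp [Function.mem_support, (exp_pos _).ne']
  rw [this, univ_inter]
  simp [Real.volume_Ioi]

lemma upperI {p q : ℝ} (hp : 1 < p) (hq : q = p / (p - 1)) {t : ℝ} (ht : 1 ≤ t) :
    log (∫ x in Ioi (0:ℝ), exp (t * x - x ^ p)) ≤
      (p - 1) / p ^ q * t ^ q + (log (2 ^ q + Kp p) + q * t) := by
  have hp0 : (0:ℝ) < p := by linarith
  have hp1 : p - 1 ≠ 0 := by linarith
  have hq1 : 1 < q := (q_facts hp hq).1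
  have ht0 : (0:ℝ) < t := by linarith
  have he : (p - 1)⁻¹ = q - 1 := by
    field_simp [hq]
    have : q * (p - 1) = p := by rw [hq, div_mul_cancel₀ _ hp1]
    linarith
  set x₁ : ℝ := (2 * t) ^ ((p - 1)⁻¹ : ℝ) with hx₁def
  have h2t : (1:ℝ) ≤ 2 * t := by linarith
  have hx₁1 : 1 ≤ x₁ := Real.one_le_rpow h2t (by rw [inv_nonneg]; linarith)
  have hx₁0 : 0 < x₁ := by linarith
  have key1 : x₁ ^ (p - 1) = 2 * t := by
    rw [hx₁def, ← Real.rpow_mul (by linarith), inv_mul_cancel₀ hp1, Real.rpow_one]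
  set M : ℝ := (p - 1) / p ^ q * t ^ q with hM
  have hM0 : 0 ≤ M := by
    have h1 := rpow_pos_of_pos hp0 q
    have h2 := rpow_pos_of_pos ht0 q
    have : (0:ℝ) < p - 1 := by linarith
    positivity
  set I := ∫ x in Ioi (0:ℝ), exp (t * x - x ^ p) with hI
  have hsplit : I = (∫ x in Ioc (0:ℝ) x₁, exp (t * x - x ^ p)) +
      ∫ x in Ioi x₁, exp (t * x - x ^ p) := by
    rw [hI, ← Ioc_union_Ioi_eq_Ioi hx₁0.le]
    exact setIntegral_union (Ioc_disjoint_Ioi le_rfl) measurableSet_Ioi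
      ((integrableI hp hq t).mono_set (fun x hx => hx.1))
      ((integrableI hp hq t).mono_set (Ioi_subset_Ioi hx₁0.le))
  have bound1 : ∫ x in Ioc (0:ℝ) x₁, exp (t * x - x ^ p) ≤ exp M * x₁ := by
    have h : ∫ x in Ioc (0:ℝ) x₁, exp (t * x - x ^ p) ≤ ∫ _x in Ioc (0:ℝ) x₁, exp M := by
      apply setIntegral_mono_on ((integrableI hp hq t).mono_set (fun x hx => hx.1))
        (integrableOn_const (by rw [Real.volume_Ioc]; exact ENNReal.ofReal_ne_top))
        measurableSet_Ioc
      intro x hx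
      apply Real.exp_le_exp.2
      have := young_key hp hq ht0.le hx.1.le
      linarith
    calc ∫ x in Ioc (0:ℝ) x₁, exp (t * x - x ^ p) ≤ ∫ _x in Ioc (0:ℝ) x₁, exp M := h
      _ = (volume (Ioc (0:ℝ) x₁)).toReal • exp M := setIntegral_const _
      _ = exp M * x₁ := by
          rw [Real.volume_Ioc, smul_eq_mul, sub_zero, ENNReal.toReal_ofReal hx₁0.le, mul_comm]
  have bound2 : ∫ x in Ioi x₁, exp (t * x - x ^ p) ≤ Kp p := by
    have step1 : ∫ x in Ioi x₁, exp (t * x - x ^ p) ≤ ∫ x in Ioi x₁, exp (-2⁻¹ * x ^ p) := by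
      apply setIntegral_mono_on ((integrableI hp hq t).mono_set (Ioi_subset_Ioi hx₁0.le))
        ((integrable_base hp).mono_set (Ioi_subset_Ioi hx₁0.le)) measurableSet_Ioi
      intro x hx
      apply Real.exp_le_exp.2
      have hx0 : 0 < x := lt_trans hx₁0 hx
      have h1 : x₁ ^ (p - 1) ≤ x ^ (p - 1) :=
        Real.rpow_le_rpow hx₁0.le (le_of_lt hx) (by linarith)
      have h2 : x ^ p = x ^ (p - 1) * x := by
        nth_rewrite 1 [show p = (p - 1) + 1 by ring]
        rw [Real.rpow_add hx0, Real.rpow_one]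
      rw [key1] at h1
      nlinarith [mul_le_mul_of_nonneg_right h1 hx0.le]
    have step2 : ∫ x in Ioi x₁, exp (-2⁻¹ * x ^ p) ≤ Kp p := by
      apply setIntegral_mono_set (integrable_base hp)
      · filter_upwards with x using (exp_pos _).le
      · filter_upwards with x hx using lt_trans hx₁0 hx
    linarith
  have hexpM1 : (1:ℝ) ≤ exp M := by rw [← Real.exp_zero]; exact Real.exp_le_exp.2 hM0
  have hIle : I ≤ (x₁ + Kp p) * exp M := by
    have : exp M * x₁ + Kp p ≤ (x₁ + Kp p) * exp M := by nlinarith [Kp_nonneg p]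
    linarith [hsplit.le, bound1, bound2, hsplit.ge]
  have hI0 : 0 < I := Ipos hp hq t
  have hKpos : 0 < x₁ + Kp p := by linarith [Kp_nonneg p]
  have hlog : log I ≤ log (x₁ + Kp p) + M := by
    calc log I ≤ log ((x₁ + Kp p) * exp M) := Real.log_le_log hI0 hIle
      _ = log (x₁ + Kp p) + M := by rw [Real.log_mul hKpos.ne' (exp_ne_zero M), Real.log_exp]
  have h2q0 : (0:ℝ) < 2 ^ q := rpow_pos_of_pos two_pos q
  have hx₁le : x₁ ≤ 2 ^ q * t ^ q := by
    rw [hx₁def, he]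
    calc (2 * t) ^ (q - 1) ≤ (2 * t) ^ q :=
        Real.rpow_le_rpow_of_exponent_le h2t (by linarith)
      _ = 2 ^ q * t ^ q := Real.mul_rpow (by norm_num) ht0.le
  have htq1 : 1 ≤ t ^ q := Real.one_le_rpow ht (by linarith)
  have hsum : x₁ + Kp p ≤ (2 ^ q + Kp p) * t ^ q := by nlinarith [Kp_nonneg p]
  have h2qK : (0:ℝ) < 2 ^ q + Kp p := by linarith [Kp_nonneg p]
  have hlog2 : log (x₁ + Kp p) ≤ log (2 ^ q + Kp p) + q * log t := by
    calc log (x₁ + Kp p) ≤ log ((2 ^ q + Kp p) * t ^ q) := Real.log_le_log hKpos hsum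
      _ = log (2 ^ q + Kp p) + q * log t := by
          rw [Real.log_mul h2qK.ne' (by positivity), Real.log_rpow ht0]
  have hlogt : log t ≤ t := by linarith [Real.log_le_sub_one_of_pos ht0]
  have hqlt : q * log t ≤ q * t := mul_le_mul_of_nonneg_left hlogt (by linarith)
  linarith

lemma tendsto_ratio {c q : ℝ} (hc : 0 < c) (hq : 1 < q) (f : ℝ → ℝ) (A B : ℝ)
    (h : ∀ᶠ t in atTop, |f t - c * t ^ q| ≤ A + B * t) :
    Tendsto (fun t => f t / (c * t ^ q)) atTop (𝓝 1) := by
  have h0 : Tendsto (fun t : ℝ => |A| / c * t ^ (-q) + |B| / c * t ^ (-(q - 1)))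
      atTop (𝓝 0) := by
    have h1 := (tendsto_rpow_neg_atTop (by linarith : (0:ℝ) < q)).const_mul (|A| / c)
    have h2 := (tendsto_rpow_neg_atTop (by linarith : (0:ℝ) < q - 1)).const_mul (|B| / c)
    simpa using h1.add h2
  have key : Tendsto (fun t => f t / (c * t ^ q) - 1) atTop (𝓝 0) := by
    apply squeeze_zero_norm' _ h0
    filter_upwards [h, eventually_ge_atTop (1:ℝ)] with t hab ht1
    have ht0 : (0:ℝ) < t := by linarith
    have htq : (0:ℝ) < t ^ q := rpow_pos_of_pos ht0 q
    have hden : (0:ℝ) < c * t ^ q := by positivity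
    rw [Real.norm_eq_abs,
      show f t / (c * t ^ q) - 1 = (f t - c * t ^ q) / (c * t ^ q) by field_simp,
      abs_div, abs_of_pos hden]
    have hnum : |f t - c * t ^ q| ≤ |A| + |B| * t := by
      refine hab.trans ?_
      have := le_abs_self A
      have := le_abs_self B
      nlinarith
    have hnegq : t ^ (-q : ℝ) = (t ^ q)⁻¹ := Real.rpow_neg ht0.le q
    have hsplit : t ^ (-(q - 1) : ℝ) = t * (t ^ q)⁻¹ := by
      rw [show (-(q - 1) : ℝ) = 1 + -q by ring, Real.rpow_add ht0, Real.rpow_one,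
        Real.rpow_neg ht0.le]
    rw [hnegq, hsplit]
    have heq : |A| / c * (t ^ q)⁻¹ + |B| / c * (t * (t ^ q)⁻¹) =
        (|A| + |B| * t) / (c * t ^ q) := by field_simp
    rw [heq]
    gcongr
  have := key.add (tendsto_const_nhds : Tendsto (fun _ : ℝ => (1:ℝ)) atTop (𝓝 1))
  simpa using this

lemma nup_eq {p q : ℝ} (hp : 1 < p) (hq : q = p / (p - 1)) (t : ℝ) :
    ∫ x, exp (t * x) ∂(nup p) = (2 * Real.Gamma (1 + 1 / p))⁻¹ *
      ((∫ x in Ioi (0:ℝ), exp (-t * x - x ^ p)) +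
        ∫ x in Ioi (0:ℝ), exp (t * x - x ^ p)) := by
  have hp0 : (0:ℝ) < p := by linarith
  set γ : ℝ := Real.Gamma (1 + 1 / p) with hγdef
  have hγ : 0 < γ := Real.Gamma_pos_of_pos (by positivity)
  set g : ℝ → ℝ := fun x => (2 * γ)⁻¹ * exp (-(|x| ^ p)) with hgdef
  have hgnonneg : ∀ x, 0 ≤ g x := fun x => by positivity
  have hgcont : Continuous g := continuous_const.mul (Real.continuous_exp.comp
    (((Real.continuous_rpow_const hp0.le).comp continuous_abs).neg))
  have hmeas : Measurable fun x => (g x).toNNReal :=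
    measurable_real_toNNReal.comp hgcont.measurable
  have hnup : nup p = volume.withDensity fun x => ((g x).toNNReal : ℝ≥0∞) := rfl
  set G : ℝ → ℝ := fun x => exp (t * x - |x| ^ p) with hGdef
  have step2 : ∫ x, exp (t * x) ∂(nup p) = ∫ x, (g x).toNNReal • exp (t * x) := by
    rw [hnup, integral_withDensity_eq_integral_smul hmeas]
  have step3 : ∫ x, (g x).toNNReal • exp (t * x) = (2 * γ)⁻¹ * ∫ x, G x := by
    rw [← integral_const_mul]
    congr 1
    funext x
    rw [NNReal.smul_def, smul_eq_mul, Real.coe_toNNReal _ (hgnonneg x), hgdef, hGdef]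
    simp only []
    rw [mul_assoc, ← Real.exp_add]
    congr 2
    ring
  -- integrability on the two halves
  have int_Ioi : IntegrableOn G (Ioi 0) := by
    refine (integrableI hp hq t).congr_fun (fun x hx => ?_) measurableSet_Ioi
    rw [hGdef]; simp only []; rw [abs_of_pos hx]
  have int_Iic : IntegrableOn G (Iic 0) := by
    rw [← Measure.map_neg_eq_self (volume : Measure ℝ)]
    have m : MeasurableEmbedding fun x : ℝ => -x := (Homeomorph.neg ℝ).measurableEmbedding
    rw [m.integrableOn_map_iff]
    have : (fun x : ℝ => -x) ⁻¹' (Iic 0) = Ici 0 := by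
      ext x; simp
    rw [this]
    rw [integrableOn_Ici_iff_integrableOn_Ioi]
    refine (integrableI hp hq (-t)).congr_fun (fun x hx => ?_) measurableSet_Ioi
    simp only [Function.comp_def, hGdef, abs_neg]
    rw [abs_of_pos hx]
    ring_nf
  have step5 : ∫ x, G x = (∫ x in Iic (0:ℝ), G x) + ∫ x in Ioi (0:ℝ), G x := by
    rw [← setIntegral_union (Iic_disjoint_Ioi le_rfl) measurableSet_Ioi int_Iic int_Ioi,
      Iic_union_Ioi, Measure.restrict_univ]
  have step6 : ∫ x in Iic (0:ℝ), G x = ∫ x in Ioi (0:ℝ), exp (-t * x - x ^ p) := by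
    have e1 : ∫ x in Ioi (0:ℝ), G (-x) = ∫ x in Iic (0:ℝ), G x := by
      simpa using integral_comp_neg_Ioi 0 G
    rw [← e1]
    refine setIntegral_congr_fun measurableSet_Ioi (fun x hx => ?_)
    rw [hGdef]; simp only [abs_neg]
    rw [abs_of_pos hx]
    ring_nf
  have step7 : ∫ x in Ioi (0:ℝ), G x = ∫ x in Ioi (0:ℝ), exp (t * x - x ^ p) := by
    refine setIntegral_congr_fun measurableSet_Ioi (fun x hx => ?_)
    rw [hGdef]; simp only []; rw [abs_of_pos hx]
  rw [step2, step3, step5, step6, step7]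

theorem stmt16 (p : ℝ) (hp : 1 < p) (q : ℝ) (hq : q = p / (p - 1)) :
    Tendsto (fun t => log (∫ x in Ioi (0:ℝ), exp (t * x - x ^ p)) /
        ((p - 1) / p ^ q * t ^ q)) atTop (𝓝 1) ∧
    Tendsto (fun t => log (∫ x, exp (t * x) ∂(nup p)) /
        ((p - 1) / p ^ q * t ^ q)) atTop (𝓝 1) := by
  have hp0 : (0:ℝ) < p := by linarith
  have hq1 : 1 < q := (q_facts hp hq).1
  have hc : 0 < (p - 1) / p ^ q := by
    have := rpow_pos_of_pos hp0 q
    have : (0:ℝ) < p - 1 := by linarith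
    positivity
  set c : ℝ := (p - 1) / p ^ q with hcdef
  set A : ℝ := |log (2 ^ q + Kp p)| with hAdef
  set B : ℝ := 2 ^ (p - 1) + q with hBdef
  have h2p0 : (0:ℝ) < 2 ^ (p - 1) := rpow_pos_of_pos two_pos _
  have hbound : ∀ᶠ t : ℝ in atTop,
      |log (∫ x in Ioi (0:ℝ), exp (t * x - x ^ p)) - c * t ^ q| ≤ A + B * t := by
    filter_upwards [eventually_ge_atTop (max p 1), eventually_ge_atTop (1:ℝ)] with t ht1 ht2
    have ht0 : (0:ℝ) ≤ t := by linarith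
    have hlow := lowerI hp hq ht1
    have hup := upperI hp hq ht2
    rw [abs_le]
    constructor
    · have h1 : 2 ^ (p - 1) * t ≤ A + B * t := by
        have := abs_nonneg (log (2 ^ q + Kp p))
        nlinarith
      linarith
    · have h2 : log (2 ^ q + Kp p) + q * t ≤ A + B * t := by
        have := le_abs_self (log (2 ^ q + Kp p))
        nlinarith
      linarith
  constructor
  · exact tendsto_ratio hc hq1 _ A B hbound
  · apply tendsto_ratio hc hq1 _ (A + |log (2 * Real.Gamma (1 + 1 / p))| + log 2) B
    filter_upwards [hbound, eventually_ge_atTop (max p 1), eventually_ge_atTop (1:ℝ)]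
      with t hb ht1 ht2
    have ht0 : (0:ℝ) ≤ t := by linarith
    set γ : ℝ := Real.Gamma (1 + 1 / p) with hγdef
    have hγ : 0 < γ := Real.Gamma_pos_of_pos (by positivity)
    set I : ℝ := ∫ x in Ioi (0:ℝ), exp (t * x - x ^ p) with hIdef
    set J : ℝ := ∫ x in Ioi (0:ℝ), exp (-t * x - x ^ p) with hJdef
    have hI0 : 0 < I := Ipos hp hq t
    have hJ0 : 0 < J := Ipos hp hq (-t)
    have hJI : J ≤ I := by
      apply setIntegral_mono_on (integrableI hp hq (-t)) (integrableI hp hq t)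
        measurableSet_Ioi
      intro x hx
      apply Real.exp_le_exp.2
      nlinarith [mem_Ioi.1 hx]
    have heq : log (∫ x, exp (t * x) ∂(nup p)) = -log (2 * γ) + log (J + I) := by
      rw [nup_eq hp hq t, ← hJdef, ← hIdef, Real.log_mul (by positivity) (by positivity),
        Real.log_inv]
    have hmid1 : log I ≤ log (J + I) := Real.log_le_log hI0 (by linarith)
    have hmid2 : log (J + I) ≤ log 2 + log I := by
      rw [← Real.log_mul two_ne_zero hI0.ne']
      exact Real.log_le_log (by linarith) (by linarith)
    rw [abs_le] at hb ⊢
    have hla := le_abs_self (log (2 * γ))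
    have hlb := neg_abs_le (log (2 * γ))
    have hl2 : (0:ℝ) ≤ log 2 := log_nonneg one_le_two
    rw [heq]
    constructor <;> [linarith [hb.1]; linarith [hb.2]]
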